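/- arXiv:2509.04614 — 2 statements merged into one kernel-verified Lean document; each statement's English description precedes it below -/
import Mathlib

section
/- Let Q be an acyclic quiver with a mutable sink vertex x. Then the number of F_2-points of the cluster variety of Q satisfies the recursion #V(Q) = #V(Q - x) + 2·#V(Q - N(x)), where Q - x deletes the vertex x and Q - N(x) deletes x together with all its neighbors. -/
/-- The projective line over a field `F`. -/
abbrev P1 (F : Type*) [Field F] := Projectivization F (F × F)

/-- The point `[1:0]` of the projective line. -/
noncomputable def ptZero (F : Type*) [Field F] : P1 F :=
  Projectivization.mk F (1, 0) (fun h => one_ne_zero (congrArg Prod.fst h))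

/-- The point `[0:1]` of the projective line. -/
noncomputable def ptInf (F : Type*) [Field F] : P1 F :=
  Projectivization.mk F (0, 1) (fun h => one_ne_zero (congrArg Prod.snd h))

/-- The point `[1:1]` of the projective line. -/
noncomputable def ptOne (F : Type*) [Field F] : P1 F :=
  Projectivization.mk F (1, 1) (fun h => one_ne_zero (congrArg Prod.fst h))

/-- `p = (i, j)` is a diagonal of the convex `(m+1)`-gon with vertices `0, …, m`:
`i < j`, the two vertices are not consecutive, and `(0, m)` is excluded (it is a side). -/
def IsDiag (m : ℕ) (p : ℕ × ℕ) : Prop :=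
  p.1 + 2 ≤ p.2 ∧ p.2 ≤ m ∧ ¬(p.1 = 0 ∧ p.2 = m)

instance (m : ℕ) (p : ℕ × ℕ) : Decidable (IsDiag m p) := by unfold IsDiag; infer_instance

/-- The type of diagonals of the convex `(m+1)`-gon. -/
abbrev Diagonal (m : ℕ) := {p : ℕ × ℕ // IsDiag m p}

/-- Two diagonals cross in the interior of the polygon. -/
def Crossing {m : ℕ} (d e : Diagonal m) : Prop :=
  (d.val.1 < e.val.1 ∧ e.val.1 < d.val.2 ∧ d.val.2 < e.val.2) ∨
  (e.val.1 < d.val.1 ∧ d.val.1 < e.val.2 ∧ e.val.2 < d.val.2)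

/-- A triangulation of the convex `(m+1)`-gon: a maximal set of pairwise
non-crossing diagonals (maximality = having `(m+1) - 3` diagonals). -/
structure Triangulation (m : ℕ) where
  diags : Finset (Diagonal m)
  noncross : ∀ d ∈ diags, ∀ e ∈ diags, ¬ Crossing d e
  card_eq : diags.card = m - 2

/-- `y` takes distinct values on the endpoints of every diagonal of `T`
(i.e. `y` lies in the cluster torus of `T`). -/
def ProperDiags {F : Type*} [Field F] {m : ℕ} (T : Triangulation m) (y : ℕ → P1 F) : Prop :=
  ∀ d ∈ T.diags, y d.val.1 ≠ y d.val.2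

/-- `c` is a proper coloring of the full graph of the triangulation `T`
(sides of the polygon together with the diagonals of `T`). -/
def ProperGraph {F : Type*} [Field F] {m : ℕ} (T : Triangulation m) (c : ℕ → P1 F) : Prop :=
  (∀ i < m, c i ≠ c (i + 1)) ∧ c m ≠ c 0 ∧ ProperDiags T c

/-- `y` is a point of `X_F(m)`: `y 0 = [1:0]`, `y m = [0:1]`, consecutive entries distinct. -/
def XCond (F : Type*) [Field F] (m : ℕ) (y : ℕ → P1 F) : Prop :=
  y 0 = ptZero F ∧ y m = ptInf F ∧ ∀ i < m, y i ≠ y (i + 1)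

/-- `y` is the alternating sequence `([1:0], [0:1], [1:0], …)` on `0, …, m`. -/
def IsAltSeq (F : Type*) [Field F] (m : ℕ) (y : ℕ → P1 F) : Prop :=
  ∀ i ≤ m, y i = if i % 2 = 0 then ptZero F else ptInf F

/-- The diagonal `d` is valid for the point `y`: its endpoints have distinct labels and
on each of the two sub-polygons determined by `d` the labels take at least three values. -/
def ValidDiag (F : Type*) [Field F] (m : ℕ) (y : ℕ → P1 F) (d : Diagonal m) : Prop :=
  y d.val.1 ≠ y d.val.2 ∧
  3 ≤ (y '' (Set.Icc d.val.1 d.val.2)).ncard ∧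
  3 ≤ (y '' (Set.Icc 0 d.val.1 ∪ Set.Icc d.val.2 m)).ncard

/-- `T'` is obtained from `T` by removing the diagonals `old` and adding the diagonals `new`. -/
def SwapMove {m : ℕ} (T T' : Triangulation m) (old new : Finset (Diagonal m)) : Prop :=
  old ⊆ T.diags ∧ T'.diags = (T.diags \ old) ∪ new

/-- Zig-zag hexagonal move: inside a hexagonal sub-polygon with vertices
`v 0 < ⋯ < v 5`, replace the zig-zag `{15, 35, 36}` by the zig-zag `{24, 26, 46}`
(in the labels `1, …, 6` of the hexagon). -/
def ZigZagMoveOne {m : ℕ} (T T' : Triangulation m) : Prop :=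
  ∃ v : Fin 6 → ℕ, StrictMono v ∧ v 5 ≤ m ∧
    ∃ (h1 : IsDiag m (v 0, v 4)) (h2 : IsDiag m (v 2, v 4)) (h3 : IsDiag m (v 2, v 5))
      (h4 : IsDiag m (v 1, v 3)) (h5 : IsDiag m (v 1, v 5)) (h6 : IsDiag m (v 3, v 5)),
      SwapMove T T' {⟨(v 0, v 4), h1⟩, ⟨(v 2, v 4), h2⟩, ⟨(v 2, v 5), h3⟩}
        {⟨(v 1, v 3), h4⟩, ⟨(v 1, v 5), h5⟩, ⟨(v 3, v 5), h6⟩}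

/-- Inscribed-triangle hexagonal move: inside a hexagonal sub-polygon with vertices
`v 0 < ⋯ < v 5`, replace the inscribed triangle `{13, 35, 51}` by `{24, 46, 62}`. -/
def InscribedMoveOne {m : ℕ} (T T' : Triangulation m) : Prop :=
  ∃ v : Fin 6 → ℕ, StrictMono v ∧ v 5 ≤ m ∧
    ∃ (h1 : IsDiag m (v 0, v 2)) (h2 : IsDiag m (v 2, v 4)) (h3 : IsDiag m (v 0, v 4))
      (h4 : IsDiag m (v 1, v 3)) (h5 : IsDiag m (v 3, v 5)) (h6 : IsDiag m (v 1, v 5)),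
      SwapMove T T' {⟨(v 0, v 2), h1⟩, ⟨(v 2, v 4), h2⟩, ⟨(v 0, v 4), h3⟩}
        {⟨(v 1, v 3), h4⟩, ⟨(v 3, v 5), h5⟩, ⟨(v 1, v 5), h6⟩}

/-- A hexagonal move (in either direction). -/
def HexMove {m : ℕ} (T T' : Triangulation m) : Prop :=
  ZigZagMoveOne T T' ∨ ZigZagMoveOne T' T ∨ InscribedMoveOne T T' ∨ InscribedMoveOne T' T

/-- The `F₂`-points of the cluster variety of an acyclic quiver with arrow function `arr`
(all vertices mutable, frozen variables being set to `1`): tuples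
`(x, x')` satisfying the exchange relation at every vertex. -/
abbrev QPoints {V : Type*} [Fintype V] [DecidableEq V] (arr : V → V → Bool) : Type _ :=
  {p : (V → ZMod 2) × (V → ZMod 2) //
    ∀ k, p.1 k * p.2 k =
      (∏ j ∈ Finset.univ.filter (fun j => arr k j = true), p.1 j) +
      ∏ j ∈ Finset.univ.filter (fun j => arr j k = true), p.1 j}

/-- The quiver has no directed cycles. -/
def QAcyclic {V : Type*} (arr : V → V → Bool) : Prop :=
  ∀ v, ¬ Relation.TransGen (fun i j => arr i j = true) v v


section stmt0helpers
open Finset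

lemma prod_split {V : Type*} [Fintype V] (Q : V → Prop) [DecidablePred Q]
    (P : V → Bool) (f : V → ZMod 2) (h1 : ∀ v, ¬ Q v → P v = true → f v = 1) :
    (∏ j ∈ Finset.univ.filter (fun j => P j = true), f j) =
    ∏ a ∈ Finset.univ.filter (fun a : {v // Q v} => P a.val = true), f a.val := by
  rw [Finset.prod_filter, Finset.prod_filter]
  rw [← Fintype.prod_subtype_mul_prod_subtype Q (fun j => if P j = true then f j else 1)]
  have h : ∏ a : {v // ¬ Q v}, (if P a.val = true then f a.val else 1) = 1 :=
    Finset.prod_eq_one (fun a _ => by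
      by_cases h : P a.val = true
      · rw [if_pos h, h1 _ a.2 h]
      · rw [if_neg h])
  rw [h, mul_one]

lemma zmod2_ne_zero : ∀ z : ZMod 2, z ≠ 0 → z = 1 := by decide
lemma zmod2_not_one : ∀ z : ZMod 2, ¬ z = 1 ↔ z = 0 := by decide
lemma zmod2_of_eq : ∀ z : ZMod 2, (0 : ZMod 2) = 1 + z → z = 1 := by decide

lemma out_x {V : Type*} [Fintype V] [DecidableEq V] (arr : V → V → Bool) (x : V)
    (hsink : ∀ j, arr x j = false) (f : V → ZMod 2) :
    ∏ j ∈ univ.filter (fun j => arr x j = true), f j = 1 :=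
  Finset.prod_eq_one (fun j hj => absurd (mem_filter.mp hj).2 (by simp [hsink j]))

section B

variable {V : Type*} [Fintype V] [DecidableEq V] (arr : V → V → Bool) (x : V)

/-- Extension of the first coordinate function. -/
def extB1 (hsink : ∀ j, arr x j = false)
    (q1 : {v : V // v ≠ x ∧ arr v x = false ∧ arr x v = false} → ZMod 2) : V → ZMod 2 :=
  fun v => if h : v = x then 0 else if h2 : arr v x = true then 1 else
    q1 ⟨v, ⟨h, by simpa using h2, hsink v⟩⟩

/-- Extension of the second coordinate function. -/
def extB2 (hsink : ∀ j, arr x j = false)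
    (q1 q2 : {v : V // v ≠ x ∧ arr v x = false ∧ arr x v = false} → ZMod 2)
    (t : ZMod 2) : V → ZMod 2 :=
  fun v => if h : v = x then t else if h2 : arr v x = true then
      ∏ l ∈ univ.filter (fun l => arr l v = true), extB1 arr x hsink q1 l
    else q2 ⟨v, ⟨h, by simpa using h2, hsink v⟩⟩

lemma hnb_of_pt (hsink : ∀ j, arr x j = false) (p : QPoints arr) (hp0 : p.val.1 x = 0) :
    ∀ j, arr j x = true → p.val.1 j = 1 := by
  have hrel := p.2 x
  rw [hp0, zero_mul, out_x arr x hsink] at hrel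
  have hin := zmod2_of_eq _ hrel
  intro j hj
  apply zmod2_ne_zero
  intro h0
  rw [Finset.prod_eq_zero (mem_filter.mpr ⟨mem_univ j, hj⟩) h0] at hin
  exact absurd hin (by decide)

lemma cardB (hsink : ∀ j, arr x j = false) :
    Fintype.card {p : QPoints arr // p.val.1 x = 0} =
      2 * Fintype.card (QPoints
        (fun a b : {v : V // v ≠ x ∧ arr v x = false ∧ arr x v = false} =>
          arr a.val b.val)) := by
  set Q : V → Prop := fun v => v ≠ x ∧ arr v x = false ∧ arr x v = false with hQ
  have key : Fintype.card {p : QPoints arr // p.val.1 x = 0} =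
      Fintype.card (ZMod 2 × QPoints (fun a b : {v : V // Q v} => arr a.val b.val)) := by
    apply Fintype.card_congr
    refine
      { toFun := fun p => (p.val.val.2 x,
          ⟨(fun a => p.val.val.1 a.val, fun a => p.val.val.2 a.val), ?_⟩)
        invFun := fun tq => ⟨⟨(extB1 arr x hsink tq.2.val.1,
          extB2 arr x hsink tq.2.val.1 tq.2.val.2 tq.1), ?_⟩, dif_pos rfl⟩
        left_inv := ?_, right_inv := ?_ }
    · -- forward relation
      obtain ⟨⟨⟨p1, p2⟩, hrel⟩, hp0⟩ := p
      change p1 x = 0 at hp0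
      have hnb := hnb_of_pt arr x hsink ⟨⟨p1, p2⟩, hrel⟩ hp0
      change ∀ j, arr j x = true → p1 j = 1 at hnb
      intro k
      have conv : ∀ P : V → Bool, P x = false →
          (∏ j ∈ univ.filter (fun j => P j = true), p1 j) =
          ∏ a ∈ univ.filter (fun a : {v // Q v} => P a.val = true), p1 a.val := by
        intro P hPx
        refine prod_split Q P p1 (fun v hv hPv => ?_)
        by_cases h1 : v = x
        · rw [h1, hPx] at hPv; cases hPv
        · by_cases h2 : arr v x = true
          · exact hnb v h2
          · exact absurd ⟨h1, by simpa using h2, hsink v⟩ hv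
      have := hrel k.val
      rw [conv (fun j => arr k.val j) k.2.2.1,
        conv (fun j => arr j k.val) (hsink k.val)] at this
      exact this
    · -- inverse relation
      obtain ⟨t, ⟨⟨q1, q2⟩, hq⟩⟩ := tq
      intro k
      dsimp only
      have he1x : extB1 arr x hsink q1 x = 0 := dif_pos rfl
      have he1nb : ∀ j, arr j x = true → extB1 arr x hsink q1 j = 1 := by
        intro j hj
        have hjx : j ≠ x := fun h => by rw [h, hsink x] at hj; cases hj
        rw [extB1, dif_neg hjx, dif_pos hj]
      by_cases hk : k = x
      · subst hk
        rw [he1x, zero_mul, out_x arr k hsink]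
        rw [Finset.prod_eq_one (fun j hj => he1nb j (mem_filter.mp hj).2)]
        decide
      · by_cases hk2 : arr k x = true
        · rw [he1nb k hk2, one_mul, extB2, dif_neg hk, dif_pos hk2]
          have hout : ∏ j ∈ univ.filter (fun j => arr k j = true), extB1 arr x hsink q1 j
              = 0 := Finset.prod_eq_zero (mem_filter.mpr ⟨mem_univ x, hk2⟩) he1x
          rw [hout, zero_add]
        · have hkQ : Q k := ⟨hk, by simpa using hk2, hsink k⟩
          have conv : ∀ P : V → Bool, P x = false →
              (∏ j ∈ univ.filter (fun j => P j = true), extB1 arr x hsink q1 j) =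
              ∏ a ∈ univ.filter (fun a : {v // Q v} => P a.val = true), q1 a := by
            intro P hPx
            rw [prod_split Q P _ (fun v hv hPv => ?_)]
            · refine Finset.prod_congr rfl (fun a _ => ?_)
              rw [extB1, dif_neg a.2.1, dif_neg (by simp [a.2.2.1])]
            · by_cases h1 : v = x
              · rw [h1, hPx] at hPv; cases hPv
              · by_cases h2 : arr v x = true
                · exact he1nb v h2
                · exact absurd ⟨h1, by simpa using h2, hsink v⟩ hv
          rw [show extB1 arr x hsink q1 k = q1 ⟨k, hkQ⟩ from by
              rw [extB1, dif_neg hk, dif_neg hk2],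
            show extB2 arr x hsink q1 q2 t k = q2 ⟨k, hkQ⟩ from by
              rw [extB2, dif_neg hk, dif_neg hk2],
            conv (fun j => arr k j) hkQ.2.1, conv (fun j => arr j k) (hsink k)]
          exact hq ⟨k, hkQ⟩
    · -- left inverse
      rintro ⟨⟨⟨p1, p2⟩, hrel⟩, hp0⟩
      change p1 x = 0 at hp0
      have hnb := hnb_of_pt arr x hsink ⟨⟨p1, p2⟩, hrel⟩ hp0
      change ∀ j, arr j x = true → p1 j = 1 at hnb
      have h1 : extB1 arr x hsink (fun a => p1 a.val) = p1 := by
        funext v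
        rw [extB1]
        by_cases h : v = x
        · rw [dif_pos h, h, hp0]
        · rw [dif_neg h]
          by_cases h2 : arr v x = true
          · rw [dif_pos h2, hnb v h2]
          · rw [dif_neg h2]
      apply Subtype.ext
      apply Subtype.ext
      dsimp only
      refine Prod.ext h1 ?_
      funext v
      dsimp only
      rw [extB2]
      by_cases h : v = x
      · rw [dif_pos h, h]
      · rw [dif_neg h]
        by_cases h2 : arr v x = true
        · rw [dif_pos h2, h1]
          have := hrel v
          dsimp only at this
          rw [hnb v h2, one_mul,
            Finset.prod_eq_zero (mem_filter.mpr ⟨mem_univ x, h2⟩) hp0, zero_add] at this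
          exact this.symm
        · rw [dif_neg h2]
    · -- right inverse
      rintro ⟨t, ⟨⟨q1, q2⟩, hq⟩⟩
      refine Prod.ext (dif_pos rfl) ?_
      apply Subtype.ext
      dsimp only
      refine Prod.ext ?_ ?_
      · funext a
        dsimp only
        rw [extB1, dif_neg a.2.1, dif_neg (by simp [a.2.2.1])]
      · funext a
        dsimp only
        rw [extB2, dif_neg a.2.1, dif_neg (by simp [a.2.2.1])]
  rw [key, Fintype.card_prod, ZMod.card]

end B

lemma cardA {V : Type*} [Fintype V] [DecidableEq V] (arr : V → V → Bool) (x : V)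
    (hsink : ∀ j, arr x j = false) :
    Fintype.card {p : QPoints arr // p.val.1 x = 1} =
      Fintype.card (QPoints (fun a b : {v : V // v ≠ x} => arr a.val b.val)) := by
  apply Fintype.card_congr
  refine
    { toFun := fun p => ⟨(fun a => p.val.val.1 a.val, fun a => p.val.val.2 a.val), ?_⟩
      invFun := fun q => ?_
      left_inv := ?_, right_inv := ?_ }
  · -- forward relation
    obtain ⟨⟨⟨p1, p2⟩, hrel⟩, hp1⟩ := p
    change p1 x = 1 at hp1
    intro k
    have conv : ∀ P : V → Bool,
        (∏ j ∈ univ.filter (fun j => P j = true), p1 j) =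
        ∏ a ∈ univ.filter (fun a : {v // v ≠ x} => P a.val = true), p1 a.val :=
      fun P => prod_split _ P p1 (fun v hv _ => by rw [not_not.mp hv]; exact hp1)
    have := hrel k.val
    simpa only [conv (fun j => arr k.val j), conv (fun j => arr j k.val)] using this
  · -- inverse
    obtain ⟨⟨q1, q2⟩, hq⟩ := q
    refine ⟨⟨(fun v => if h : v = x then 1 else q1 ⟨v, h⟩,
        fun v => if h : v = x then
          1 + ∏ j ∈ univ.filter (fun j => arr j x = true),
            (if h : j = x then 1 else q1 ⟨j, h⟩) else q2 ⟨v, h⟩), ?_⟩, dif_pos rfl⟩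
    intro k
    have conv : ∀ P : V → Bool,
        (∏ j ∈ univ.filter (fun j => P j = true),
            (if h : j = x then (1 : ZMod 2) else q1 ⟨j, h⟩)) =
        ∏ a ∈ univ.filter (fun a : {v // v ≠ x} => P a.val = true), q1 a := by
      intro P
      rw [prod_split (· ≠ x) P _ (fun v hv _ => by
        rw [not_not.mp hv]; exact dif_pos rfl)]
      exact Finset.prod_congr rfl (fun a _ => dif_neg a.2)
    dsimp only
    by_cases hk : k = x
    · subst hk
      simp only [dif_pos rfl, one_mul]
      rw [out_x arr k hsink]
      simp
    · simp only [dif_neg hk]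
      have := hq ⟨k, hk⟩
      rw [conv (fun j => arr k j), conv (fun j => arr j k)]
      exact this
  · -- left inverse
    rintro ⟨⟨⟨p1, p2⟩, hrel⟩, hp1⟩
    change p1 x = 1 at hp1
    have h1 : (fun v => if h : v = x then (1 : ZMod 2) else p1 v) = p1 := by
      funext v
      by_cases h : v = x
      · rw [dif_pos h, h, hp1]
      · rw [dif_neg h]
    apply Subtype.ext
    apply Subtype.ext
    dsimp only
    refine Prod.ext h1 ?_
    funext v
    dsimp only
    by_cases h : v = x
    · rw [dif_pos h, h]
      simp only [h1]
      have := hrel x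
      dsimp only at this
      rw [hp1, one_mul, out_x arr x hsink] at this
      exact this.symm
    · rw [dif_neg h]
  · -- right inverse
    rintro ⟨⟨q1, q2⟩, hq⟩
    apply Subtype.ext
    dsimp only
    refine Prod.ext ?_ ?_
    · funext a; exact dif_neg a.2
    · funext a; exact dif_neg a.2

lemma card_main {V : Type*} [Fintype V] [DecidableEq V] (arr : V → V → Bool) (x : V) :
    Fintype.card (QPoints arr) =
      Fintype.card {p : QPoints arr // p.val.1 x = 1} +
      Fintype.card {p : QPoints arr // p.val.1 x = 0} := by
  rw [← Fintype.card_congr (Equiv.sumCompl (fun p : QPoints arr => p.val.1 x = 1)),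
    Fintype.card_sum]
  congr 1
  exact Fintype.card_congr
    (Equiv.subtypeEquivRight (fun p => zmod2_not_one (p.val.1 x)))

end stmt0helpers

theorem stmt0 {V : Type*} [Fintype V] [DecidableEq V] (arr : V → V → Bool)
    (hacyc : QAcyclic arr) (x : V) (hsink : ∀ j, arr x j = false) :
    Fintype.card (QPoints arr) =
      Fintype.card (QPoints (fun (a b : {v : V // v ≠ x}) => arr a.val b.val)) +
      2 * Fintype.card (QPoints
        (fun (a b : {v : V // v ≠ x ∧ arr v x = false ∧ arr x v = false}) =>
          arr a.val b.val)) := by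
  rw [card_main arr x, cardA arr x hsink, cardB arr x hsink]
end

section
/- Let y = (y_0, ..., y_m) be a sequence of elements of P¹(F) with y_0 = [1:0], y_m = [0:1], and y_i ≠ y_{i+1} for all i. Then there exists a triangulation T of the (m+1)-gon such that y_i ≠ y_j for every diagonal ij of T if and only if y is not the alternating sequence ([1:0],[0:1],[1:0],...,[1:0],[0:1]). -/
lemma ptZero_ne_ptInf (F : Type*) [Field F] : ptZero F ≠ ptInf F := by
  unfold ptZero ptInf
  intro h
  rw [Projectivization.mk_eq_mk_iff] at h
  obtain ⟨a, ha⟩ := h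
  have : (a : F) * 0 = 1 := congrArg Prod.fst ha
  simp at this

def CrossP (p q : ℕ × ℕ) : Prop :=
  (p.1 < q.1 ∧ q.1 < p.2 ∧ p.2 < q.2) ∨ (q.1 < p.1 ∧ p.1 < q.2 ∧ q.2 < p.2)

lemma crossing_eq_crossP {m : ℕ} (d e : Diagonal m) : Crossing d e = CrossP d.val e.val := rfl

lemma oddBound : ∀ m : ℕ, ∀ D : Finset (ℕ × ℕ),
    (∀ p ∈ D, p.1 + 2 ≤ p.2 ∧ p.2 ≤ m ∧ (p.2 - p.1) % 2 = 1) →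
    (∀ p ∈ D, ∀ q ∈ D, ¬ CrossP p q) →
    D.card ≤ (m - 1) / 2 := by
  intro m
  induction m using Nat.strong_induction_on with
  | _ m IH =>
    intro D hD hC
    rcases D.eq_empty_or_nonempty with rfl | hne
    · simp
    obtain ⟨d, hd, hmin⟩ := D.exists_min_image (fun p => p.2 - p.1) hne
    obtain ⟨hgap, hjm, hodd⟩ := hD d hd
    set i := d.1 with hi
    set j := d.2 with hj
    have hj3 : i + 3 ≤ j := by omega
    have hout : ∀ e ∈ D.erase d, (e.1 ≤ i ∨ j ≤ e.1) ∧ (e.2 ≤ i ∨ j ≤ e.2) := by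
      intro e he
      have hed : e ≠ d := Finset.ne_of_mem_erase he
      have heD : e ∈ D := Finset.mem_of_mem_erase he
      obtain ⟨hg, hm', _⟩ := hD e heD
      have hcr := hC d hd e heD
      have hmin' := hmin e heD
      simp only [CrossP, not_or, not_and] at hcr
      have hne' : e.1 ≠ i ∨ e.2 ≠ j := by
        by_contra h; push_neg at h
        exact hed (Prod.ext h.1 h.2)
      omega
    set ψ : ℕ → ℕ := fun v => if v ≤ i then v else v - (j - i - 1) with hψ
    have hpsi : ∀ a, (a ≤ i ∨ j ≤ a) →
        (a ≤ i ∧ ψ a = a) ∨ (j ≤ a ∧ ψ a = a - (j - i - 1)) := by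
      intro a ha
      rcases ha with h | h
      · left; exact ⟨h, if_pos h⟩
      · right; exact ⟨h, if_neg (by omega)⟩
    set D' := (D.erase d).image (fun p => (ψ p.1, ψ p.2)) with hD'
    have hm3 : 3 ≤ m := by omega
    have hcard' : D'.card = D.card - 1 := by
      rw [hD', Finset.card_image_of_injOn, Finset.card_erase_of_mem hd]
      intro e he f hf hef
      have h1 := hpsi e.1 (hout e he).1
      have h2 := hpsi e.2 (hout e he).2
      have h3 := hpsi f.1 (hout f hf).1
      have h4 := hpsi f.2 (hout f hf).2
      have e1 : ψ e.1 = ψ f.1 := congrArg Prod.fst hef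
      have e2 : ψ e.2 = ψ f.2 := congrArg Prod.snd hef
      exact Prod.ext (by omega) (by omega)
    have hbound : D'.card ≤ (m - (j - i - 1) - 1) / 2 := by
      apply IH (m - (j - i - 1)) (by omega)
      · intro p hp
        obtain ⟨e, he, rfl⟩ := Finset.mem_image.1 hp
        obtain ⟨hg, hm', hpar⟩ := hD e (Finset.mem_of_mem_erase he)
        have h1 := hpsi e.1 (hout e he).1
        have h2 := hpsi e.2 (hout e he).2
        have hed : e ≠ d := Finset.ne_of_mem_erase he
        have hne' : e.1 ≠ i ∨ e.2 ≠ j := by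
          by_contra h; push_neg at h
          exact hed (Prod.ext h.1 h.2)
        exact ⟨by omega, by omega, by omega⟩
      · intro p hp q hq
        obtain ⟨e, he, rfl⟩ := Finset.mem_image.1 hp
        obtain ⟨f, hf, rfl⟩ := Finset.mem_image.1 hq
        have hcr := hC e (Finset.mem_of_mem_erase he) f (Finset.mem_of_mem_erase hf)
        have h1 := hpsi e.1 (hout e he).1
        have h2 := hpsi e.2 (hout e he).2
        have h3 := hpsi f.1 (hout f hf).1
        have h4 := hpsi f.2 (hout f hf).2
        simp only [CrossP, not_or, not_and] at hcr ⊢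
        omega
    have hpos : 1 ≤ D.card := Finset.card_pos.2 hne
    omega

lemma no_tri_of_alt {F : Type*} [Field F] {m : ℕ} (hm : 2 ≤ m) (y : ℕ → P1 F)
    (hlast : y m = ptInf F) (halt : IsAltSeq F m y) :
    ¬ ∃ T : Triangulation m, ProperDiags T y := by
  rintro ⟨T, hP⟩
  have hZI := ptZero_ne_ptInf F
  have hmodd : m % 2 = 1 := by
    by_contra h
    have h2 := halt m le_rfl
    rw [hlast, if_pos (by omega)] at h2
    exact hZI h2.symm
  have hoddgap : ∀ d ∈ T.diags, (d.val.2 - d.val.1) % 2 = 1 := by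
    intro d hd
    obtain ⟨hg, hjm, hex⟩ := d.property
    by_contra h
    apply hP d hd
    rw [halt d.val.1 (by omega), halt d.val.2 hjm]
    have hpar : d.val.1 % 2 = d.val.2 % 2 := by omega
    rw [hpar]
  by_cases hm3 : m = 3
  · subst hm3
    have hne : T.diags.Nonempty := Finset.card_pos.1 (by rw [T.card_eq]; norm_num)
    obtain ⟨d, hd⟩ := hne
    obtain ⟨hg, hjm, hex⟩ := d.property
    have := hoddgap d hd
    omega
  · have hcard := oddBound m (T.diags.image (fun d => d.val)) ?_ ?_
    · rw [Finset.card_image_of_injective _ Subtype.val_injective, T.card_eq] at hcard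
      omega
    · intro p hp
      obtain ⟨d, hd, rfl⟩ := Finset.mem_image.1 hp
      exact ⟨d.property.1, d.property.2.1, hoddgap d hd⟩
    · intro p hp q hq
      obtain ⟨d, hd, rfl⟩ := Finset.mem_image.1 hp
      obtain ⟨e, he, rfl⟩ := Finset.mem_image.1 hq
      exact T.noncross d hd e he

lemma exists_tri (F : Type*) [Field F] : ∀ m : ℕ, 2 ≤ m → ∀ y : ℕ → P1 F,
    y 0 = ptZero F → y m = ptInf F → (∀ i < m, y i ≠ y (i + 1)) →
    ¬ IsAltSeq F m y → ∃ T : Triangulation m, ProperDiags T y := by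
  intro m
  induction m using Nat.strong_induction_on with
  | _ m IH =>
  intro hm y h0 hlast hadj hna
  have hZI := ptZero_ne_ptInf F
  rcases eq_or_lt_of_le hm with hm2 | hmlt
  · refine ⟨⟨∅, by simp, by simp [← hm2]⟩, ?_⟩
    intro d hd
    simp at hd
  have hm3 : 3 ≤ m := hmlt
  -- find a foldable vertex k
  have hk : ∃ k, 1 ≤ k ∧ k ≤ m - 1 ∧ y (k - 1) ≠ y (k + 1) := by
    by_contra h
    push_neg at h
    have hper : ∀ i, i ≤ m → y i = if i % 2 = 0 then y 0 else y 1 := by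
      intro i
      induction i using Nat.strong_induction_on with
      | _ i IHi =>
      intro him
      match i with
      | 0 => simp
      | 1 => simp
      | (n+2) =>
        have hfold := h (n+1) (by omega) (by omega)
        have e1 : n + 1 - 1 = n := by omega
        rw [e1] at hfold
        have e2 : (n + 2) % 2 = n % 2 := by omega
        rw [← hfold, IHi n (by omega) (by omega), e2]
    have hmodd : m % 2 = 1 := by
      by_contra hme
      have h2 := hper m le_rfl
      rw [if_pos (by omega), h0, hlast] at h2
      exact hZI h2.symm
    have hy1 : y 1 = ptInf F := by
      have h2 := hper m le_rfl
      rw [if_neg (by omega), hlast] at h2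
      exact h2.symm
    apply hna
    intro i hi
    rw [hper i hi]
    by_cases hp : i % 2 = 0
    · rw [if_pos hp, if_pos hp, h0]
    · rw [if_neg hp, if_neg hp, hy1]
  obtain ⟨k, hk1, hkm, hky⟩ := hk
  set y' : ℕ → P1 F := fun i => if i < k then y i else y (i + 1) with hy'def
  have hy'0 : y' 0 = y 0 := by simp [hy'def, show 0 < k by omega]
  have hy'last : y' (m - 1) = y m := by
    rw [hy'def]
    simp only
    rw [if_neg (by omega), show m - 1 + 1 = m by omega]
  have hy'adj : ∀ i < m - 1, y' i ≠ y' (i + 1) := by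
    intro i hi
    rw [hy'def]
    simp only
    by_cases h1 : i + 1 < k
    · rw [if_pos (by omega), if_pos h1]
      exact hadj i (by omega)
    · by_cases h2 : i < k
      · rw [if_pos h2, if_neg h1]
        have e1 : i = k - 1 := by omega
        have e2 : i + 1 + 1 = k + 1 := by omega
        rw [e2, e1]
        exact hky
      · rw [if_neg h2, if_neg h1]
        exact hadj (i + 1) (by omega)
  have hφy : ∀ a, y (if a < k then a else a + 1) = y' a := by
    intro a
    by_cases h : a < k <;> simp [hy'def, h]
  by_cases halt' : IsAltSeq F (m - 1) y'
  · -- fan triangulation from vertex k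
    have hyj : ∀ j ≤ m, j ≠ k → (y j = ptZero F ∨ y j = ptInf F) := by
      intro j hj hjk
      by_cases h1 : j < k
      · have h2 := halt' j (by omega)
        rw [hy'def] at h2
        simp only [if_pos h1] at h2
        rw [h2]
        by_cases hp : j % 2 = 0
        · left; rw [if_pos hp]
        · right; rw [if_neg hp]
      · have h2 := halt' (j - 1) (by omega)
        rw [hy'def] at h2
        simp only [if_neg (show ¬ (j - 1 < k) by omega)] at h2
        rw [show j - 1 + 1 = j by omega] at h2
        rw [h2]
        by_cases hp : (j - 1) % 2 = 0
        · left; rw [if_pos hp]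
        · right; rw [if_neg hp]
    have hvm : y (k - 1) = (if (k - 1) % 2 = 0 then ptZero F else ptInf F) := by
      have h2 := halt' (k - 1) (by omega)
      rw [hy'def] at h2
      simp only [if_pos (show k - 1 < k by omega)] at h2
      exact h2
    have hvp : y (k + 1) = (if k % 2 = 0 then ptZero F else ptInf F) := by
      have h2 := halt' k (by omega)
      rw [hy'def] at h2
      simp only [lt_irrefl, if_neg (lt_irrefl k)] at h2
      exact h2
    have hne1 : y k ≠ y (k - 1) := by
      have := hadj (k - 1) (by omega)
      rw [show k - 1 + 1 = k by omega] at this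
      exact this.symm
    have hne2 : y k ≠ y (k + 1) := hadj k (by omega)
    have hgood : ∀ j ≤ m, j ≠ k → y k ≠ y j := by
      intro j hj hjk
      have hk0 : y k ≠ ptZero F := by
        by_cases hp : k % 2 = 0
        · rw [if_pos hp] at hvp; rw [← hvp]; exact hne2
        · rw [if_pos (show (k-1) % 2 = 0 by omega)] at hvm; rw [← hvm]; exact hne1
      have hkI : y k ≠ ptInf F := by
        by_cases hp : k % 2 = 0
        · rw [if_neg (show ¬ (k-1) % 2 = 0 by omega)] at hvm; rw [← hvm]; exact hne1
        · rw [if_neg hp] at hvp; rw [← hvp]; exact hne2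
      rcases hyj j hj hjk with h | h
      · rw [h]; exact hk0
      · rw [h]; exact hkI
    set Sf : Finset (ℕ × ℕ) :=
      ((Finset.range (m + 1)).filter (fun j => j + 2 ≤ k ∨ k + 2 ≤ j)).image
        (fun j => if j < k then ((j, k) : ℕ × ℕ) else (k, j)) with hSf
    have hmemf : ∀ p ∈ Sf, ∃ j, j ≤ m ∧ (j + 2 ≤ k ∨ k + 2 ≤ j) ∧
        p = (if j < k then ((j, k) : ℕ × ℕ) else (k, j)) := by
      intro p hp
      rw [hSf] at hp
      obtain ⟨j, hj, rfl⟩ := Finset.mem_image.1 hp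
      rw [Finset.mem_filter, Finset.mem_range] at hj
      exact ⟨j, by omega, hj.2, rfl⟩
    have hall : ∀ p ∈ Sf, IsDiag m p := by
      intro p hp
      obtain ⟨j, hj, hcond, rfl⟩ := hmemf p hp
      by_cases h1 : j < k
      · rw [if_pos h1]
        exact ⟨by omega, by omega, by omega⟩
      · rw [if_neg h1]
        exact ⟨by omega, by omega, by omega⟩
    have hnc : ∀ p ∈ Sf, ∀ q ∈ Sf, ¬ CrossP p q := by
      intro p hp q hq
      obtain ⟨j1, hj1, hc1, rfl⟩ := hmemf p hp
      obtain ⟨j2, hj2, hc2, rfl⟩ := hmemf q hq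
      by_cases h1 : j1 < k <;> by_cases h2 : j2 < k <;>
        simp only [if_pos, if_neg, h1, h2, ite_true, ite_false, CrossP, not_or, not_and] <;>
        omega
    refine ⟨⟨Sf.subtype (IsDiag m), ?_, ?_⟩, ?_⟩
    · intro d hd e he
      rw [Finset.mem_subtype] at hd he
      rw [crossing_eq_crossP]
      exact hnc d.val hd e.val he
    · rw [Finset.card_subtype, Finset.filter_true_of_mem hall, hSf,
        Finset.card_image_of_injOn]
      · have hseteq : (Finset.range (m + 1)).filter (fun j => j + 2 ≤ k ∨ k + 2 ≤ j) =
            Finset.range (k - 1) ∪ Finset.Icc (k + 2) m := by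
          ext j
          simp only [Finset.mem_filter, Finset.mem_range, Finset.mem_union, Finset.mem_Icc]
          omega
        rw [hseteq, Finset.card_union_of_disjoint, Finset.card_range, Nat.card_Icc]
        · omega
        · rw [Finset.disjoint_left]
          intro a ha hb
          rw [Finset.mem_range] at ha
          rw [Finset.mem_Icc] at hb
          omega
      · intro a ha b hb hab
        rw [Finset.mem_coe, Finset.mem_filter] at ha hb
        by_cases h1 : a < k <;> by_cases h2 : b < k <;>
          simp only [if_pos, if_neg, h1, h2, ite_true, ite_false, Prod.mk.injEq] at hab <;>
          omega
    · intro d hd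
      rw [Finset.mem_subtype] at hd
      obtain ⟨j, hj, hcond, hval⟩ := hmemf d.val hd
      by_cases h1 : j < k
      · rw [if_pos h1] at hval
        rw [hval]
        exact fun h => hgood j (by omega) (by omega) h.symm
      · rw [if_neg h1] at hval
        rw [hval]
        exact hgood j (by omega) (by omega)
  · -- fold at k, use induction
    obtain ⟨T', hP'⟩ := IH (m - 1) (by omega) (by omega) y' (by rw [hy'0, h0])
      (by rw [hy'last, hlast]) hy'adj halt'
    set φ : ℕ → ℕ := fun i => if i < k then i else i + 1 with hφdef
    have hφ : ∀ a, (a < k ∧ φ a = a) ∨ (k ≤ a ∧ φ a = a + 1) := by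
      intro a
      by_cases h : a < k
      · left; exact ⟨h, if_pos h⟩
      · right; exact ⟨by omega, if_neg h⟩
    set S' : Finset (ℕ × ℕ) :=
      insert ((k - 1, k + 1) : ℕ × ℕ) (T'.diags.image (fun d => (φ d.val.1, φ d.val.2)))
      with hS'
    have hmem' : ∀ p ∈ S', p = (k - 1, k + 1) ∨
        ∃ d ∈ T'.diags, p = (φ d.val.1, φ d.val.2) := by
      intro p hp
      rw [hS', Finset.mem_insert, Finset.mem_image] at hp
      rcases hp with h | ⟨d, hd, rfl⟩
      · exact Or.inl h
      · exact Or.inr ⟨d, hd, rfl⟩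
    have hall : ∀ p ∈ S', IsDiag m p := by
      intro p hp
      rcases hmem' p hp with rfl | ⟨d, hd, rfl⟩
      · exact ⟨by omega, by omega, by omega⟩
      · obtain ⟨hg, hb, hex⟩ := d.property
        have h1 := hφ d.val.1
        have h2 := hφ d.val.2
        exact ⟨by omega, by omega, by omega⟩
    have hnc : ∀ p ∈ S', ∀ q ∈ S', ¬ CrossP p q := by
      intro p hp q hq
      rcases hmem' p hp with rfl | ⟨d, hd, rfl⟩ <;>
        rcases hmem' q hq with rfl | ⟨e, he, rfl⟩
      · simp [CrossP]
      · have h1 := hφ e.val.1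
        have h2 := hφ e.val.2
        simp only [CrossP, not_or, not_and]
        omega
      · have h1 := hφ d.val.1
        have h2 := hφ d.val.2
        simp only [CrossP, not_or, not_and]
        omega
      · have hcr := T'.noncross d hd e he
        rw [crossing_eq_crossP] at hcr
        have h1 := hφ d.val.1
        have h2 := hφ d.val.2
        have h3 := hφ e.val.1
        have h4 := hφ e.val.2
        simp only [CrossP, not_or, not_and] at hcr ⊢
        omega
    refine ⟨⟨S'.subtype (IsDiag m), ?_, ?_⟩, ?_⟩
    · intro d hd e he
      rw [Finset.mem_subtype] at hd he
      rw [crossing_eq_crossP]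
      exact hnc d.val hd e.val he
    · rw [Finset.card_subtype, Finset.filter_true_of_mem hall, hS',
        Finset.card_insert_of_notMem, Finset.card_image_of_injOn, T'.card_eq]
      · omega
      · intro d hd e he hde
        have h1 := hφ d.val.1
        have h2 := hφ d.val.2
        have h3 := hφ e.val.1
        have h4 := hφ e.val.2
        have e1 : φ d.val.1 = φ e.val.1 := congrArg Prod.fst hde
        have e2 : φ d.val.2 = φ e.val.2 := congrArg Prod.snd hde
        exact Subtype.ext (Prod.ext (by omega) (by omega))
      · intro hmem
        obtain ⟨d, hd, heq⟩ := Finset.mem_image.1 hmem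
        obtain ⟨hg, hb, hex⟩ := d.property
        have h1 := hφ d.val.1
        have h2 := hφ d.val.2
        have e1 : φ d.val.1 = k - 1 := congrArg Prod.fst heq
        have e2 : φ d.val.2 = k + 1 := congrArg Prod.snd heq
        omega
    · intro d hd
      rw [Finset.mem_subtype] at hd
      rcases hmem' d.val hd with hval | ⟨e, he, hval⟩
      · rw [hval]
        exact hky
      · rw [hval]
        have hp := hP' e he
        have g1 : y (φ e.val.1) = y' e.val.1 := hφy e.val.1
        have g2 : y (φ e.val.2) = y' e.val.2 := hφy e.val.2
        rw [show ((φ e.val.1, φ e.val.2) : ℕ × ℕ).1 = φ e.val.1 from rfl,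
          show ((φ e.val.1, φ e.val.2) : ℕ × ℕ).2 = φ e.val.2 from rfl, g1, g2]
        exact hp

theorem stmt6 (F : Type*) [Field F] (m : ℕ) (hm : 2 ≤ m) (y : ℕ → P1 F)
    (h0 : y 0 = ptZero F) (hlast : y m = ptInf F) (hadj : ∀ i < m, y i ≠ y (i + 1)) :
    (∃ T : Triangulation m, ProperDiags T y) ↔ ¬ IsAltSeq F m y := by
  constructor
  · intro hT halt
    exact no_tri_of_alt hm y hlast halt hT
  · intro hna
    exact exists_tri F m hm y h0 hlast hadj hna
end
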